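/- Let κ be an uncountable cardinal with κ^{<κ} = κ and let G be a group of cardinality κ such that every group of cardinality at most κ is isomorphic to a subgroup of G, and every isomorphism between two subgroups of G each generated by strictly fewer than κ elements extends to an automorphism of G. Then Aut(G) is not universal: there exists a subgroup H of G, isomorphic to the free group on countably infinitely many generators, such that there is no injective continuous group homomorphism from the automorphism group Aut(H) of the group H into Aut(G). -/

import Mathlib

/-- The topology of pointwise convergence on the permutation group of a set `V`
(regarded as a discrete space): the topology induced from the product topology
on `V → V` where `V` carries the discrete topology. -/
instance permPointwiseTopology (V : Type*) : TopologicalSpace (Equiv.Perm V) :=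
  TopologicalSpace.induced (fun g : Equiv.Perm V => (g : V → V))
    (@Pi.topologicalSpace V (fun _ => V) (fun _ => ⊥))

/-- The topology of pointwise convergence on the automorphism group of a group `G`
(regarded as a discrete set): the topology induced from the product topology on `G → G`
where `G` carries the discrete topology. -/
instance mulAutPointwiseTopology (G : Type*) [Group G] : TopologicalSpace (MulAut G) :=
  TopologicalSpace.induced (fun g : MulAut G => (g : G → G))
    (@Pi.topologicalSpace G (fun _ => G) (fun _ => ⊥))

/-!
Realise `H` as a copy of `F_ℕ` with basis `x₀, x₁, …`. If `e : Aut(H) → Aut(G)` is continuous,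
every `g ∈ G` is fixed by `e τ` for all `τ` fixing some `x₀, …, x_{m-1}`; these `g` form an
increasing chain of subgroups `C m` exhausting `G`, and injectivity of `e` makes each `C m`
proper (swap `x_m` and `x_{m+1}`). But a group that is universal and homogeneous for countably
generated subgroups is not such a union: choosing `b n ∉ C n`, universality and homogeneity
produce a free family `Λ n ∉ C n`, and since `F_ℕ` embeds into a two-generator HNN extension,
homogeneity moves this family into a two-generated subgroup, which lies in a single `C N`.
-/

open Cardinal Function Subgroup
open scoped Monoid.Coprod

universe u

instance Monoid.Coprod.instCountable {M N : Type*} [MulOneClass M] [MulOneClass N]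
    [Countable M] [Countable N] : Countable (M ∗ N) :=
  have : Countable (FreeMonoid (M ⊕ N)) := FreeMonoid.toList.injective.countable
  Monoid.Coprod.mk_surjective.countable

theorem Subgroup.countable_closure {G : Type*} [Group G] {S : Set G} (hS : S.Countable) :
    Countable (closure S) := by
  have := hS.to_subtype
  rw [← Subtype.range_coe (s := S), ← FreeGroup.range_lift_eq_closure]
  exact (FreeGroup.lift _).rangeRestrict_surjective.countable

namespace Monoid.Coprod

variable {M α : Type*} [Group M]

def shear (c : α → M) : M ∗ FreeGroup α →* M ∗ FreeGroup α :=
  lift inl (FreeGroup.lift fun a => inl (c a) * inr (FreeGroup.of a))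

@[simp]
theorem shear_inl (c : α → M) (m : M) : shear c (inl m) = inl m := by
  simp [shear]

@[simp]
theorem shear_inr_of (c : α → M) (a : α) :
    shear c (inr (FreeGroup.of a)) = inl (c a) * inr (FreeGroup.of a) := by
  simp [shear]

theorem shear_inv_comp_shear (c : α → M) : (shear c⁻¹).comp (shear c) = MonoidHom.id _ := by
  ext a
  · simp
  · simp [← mul_assoc]

theorem shear_injective (c : α → M) : Injective (shear c) :=
  LeftInverse.injective (g := shear c⁻¹) fun x => DFunLike.congr_fun (shear_inv_comp_shear c) x

end Monoid.Coprod

noncomputable def shiftEquiv : (⊤ : Subgroup (FreeGroup ℕ)) ≃* (FreeGroup.map Nat.succ).range :=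
  Subgroup.topEquiv.trans (MonoidHom.ofInjective (FreeGroup.map_injective Nat.succ_injective))

abbrev ShiftHNN : Type := HNNExtension (FreeGroup ℕ) ⊤ (FreeGroup.map Nat.succ).range shiftEquiv

namespace ShiftHNN

open HNNExtension

theorem of_of_succ (n : ℕ) :
    (of (FreeGroup.of (n + 1)) : ShiftHNN) = t * of (FreeGroup.of n) * t⁻¹ := by
  rw [eq_mul_inv_iff_mul_eq, t_mul_of (⟨FreeGroup.of n, mem_top _⟩ : (⊤ : Subgroup _))]
  rfl

theorem closure_pair_eq_top :
    closure {(of (FreeGroup.of 0) : ShiftHNN), t} = ⊤ := by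
  set K := closure {(of (FreeGroup.of 0) : ShiftHNN), t}
  have ht : t ∈ K := subset_closure (Set.mem_insert_of_mem _ rfl)
  have hof (n : ℕ) : (of (FreeGroup.of n) : ShiftHNN) ∈ K := by
    induction n with
    | zero => exact subset_closure (Set.mem_insert _ _)
    | succ n ih => rw [of_of_succ]; exact mul_mem (mul_mem ht ih) (inv_mem ht)
  have hof_le : closure (Set.range FreeGroup.of) ≤ K.comap of := by
    rw [closure_le]
    rintro _ ⟨n, rfl⟩
    exact hof n
  rw [eq_top_iff']
  intro x
  induction x using HNNExtension.induction_on with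
  | of g => exact hof_le (by rw [FreeGroup.closure_range_of]; exact mem_top g)
  | t => exact ht
  | mul a b ha hb => exact mul_mem ha hb
  | inv a ha => exact inv_mem ha

instance : Countable ShiftHNN := by
  have := countable_closure (Set.toFinite {(of (FreeGroup.of 0) : ShiftHNN), t}).countable
  rw [closure_pair_eq_top] at this
  exact Countable.of_equiv _ Subgroup.topEquiv.toEquiv

end ShiftHNN

theorem exists_subset_closure_image_Iio {H : Type*} [Group H] {x : ℕ → H}
    (hx : closure (Set.range x) = ⊤) (s : Finset H) :
    ∃ m, (s : Set H) ⊆ closure (x '' Set.Iio m) := by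
  have hmono : Monotone fun m => closure (x '' Set.Iio m) :=
    fun m m' h => closure_mono (Set.image_mono (Set.Iio_subset_Iio h))
  have hmem (h : H) : ∃ m, h ∈ closure (x '' Set.Iio m) := by
    rw [← mem_iSup_of_directed hmono.directed_le, ← Subgroup.closure_iUnion, ← Set.image_iUnion,
      Set.iUnion_Iio, Set.image_univ, hx]
    exact mem_top h
  choose m hm using hmem
  exact ⟨s.sup m, fun h hh => hmono (Finset.le_sup hh) (hm h)⟩

section FreeGroupOfNat

variable {H : Type*} [Group H] (ι : FreeGroup ℕ ≃* H)

theorem closure_range_mulEquiv_of : closure (Set.range fun i => ι (FreeGroup.of i)) = ⊤ := by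
  have h := MonoidHom.map_closure ι.toMonoidHom (Set.range FreeGroup.of)
  rwa [FreeGroup.closure_range_of, map_top_of_surjective _ ι.surjective, ← Set.range_comp,
    eq_comm] at h

theorem exists_mulAut_fixing_Iio_ne_one (n : ℕ) :
    ∃ τ : MulAut H, (∀ y ∈ (fun i => ι (FreeGroup.of i)) '' Set.Iio n, τ y = y) ∧ τ ≠ 1 := by
  refine ⟨MulAut.congr ι (FreeGroup.freeGroupCongr (Equiv.swap n (n + 1))), ?_, fun h => ?_⟩
  · rintro _ ⟨i, hi : i < n, rfl⟩
    simp [MulAut.congr, Equiv.swap_apply_of_ne_of_ne hi.ne (by omega : i ≠ n + 1)]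
  · have := DFunLike.congr_fun h (ι (FreeGroup.of n))
    simp [MulAut.congr] at this
    exact absurd (FreeGroup.of_injective this) n.succ_ne_self

end FreeGroupOfNat

section Homogeneity

def IsUniversalUpTo (κ : Cardinal.{u}) (G : Type u) [Group G] : Prop :=
  ∀ (H : Type u) [Group H], #H ≤ κ → ∃ K : Subgroup G, Nonempty (H ≃* K)

def IsHomogeneousBelow (κ : Cardinal.{u}) (G : Type u) [Group G] : Prop :=
  ∀ A B : Subgroup G,
    (∃ S : Set G, #S < κ ∧ closure S = A) →
    (∃ S : Set G, #S < κ ∧ closure S = B) →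
    ∀ f : A ≃* B, ∃ g : MulAut G, ∀ a : A, g (a : G) = (f a : G)

variable {G : Type u} [Group G] {κ : Cardinal.{u}}

theorem IsUniversalUpTo.exists_injective (hU : IsUniversalUpTo κ G) (hκ : ℵ₀ < κ)
    (F : Type*) [Group F] [Countable F] : ∃ f : F →* G, Injective f := by
  have : Countable (Shrink.{u} F) := Countable.of_equiv F (equivShrink.{u} F)
  obtain ⟨K, ⟨ν⟩⟩ := hU (Shrink.{u} F) (mk_le_aleph0.trans hκ.le)
  exact ⟨K.subtype.comp (Shrink.mulEquiv.symm.trans ν).toMonoidHom,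
    K.subtype_injective.comp (Shrink.mulEquiv.symm.trans ν).injective⟩

theorem IsHomogeneousBelow.exists_mulAut_comp_eq (hH : IsHomogeneousBelow κ G)
    (hκ : ℵ₀ < κ) {F : Type*} [Group F] [Countable F] {f₁ f₂ : F →* G}
    (hf₁ : Injective f₁) (hf₂ : Injective f₂) : ∃ σ : MulAut G, ∀ x, σ (f₁ x) = f₂ x := by
  have small (f : F →* G) : ∃ S : Set G, #S < κ ∧ closure S = f.range :=
    ⟨Set.range f, (Set.countable_range f).le_aleph0.trans_lt hκ, by
      rw [← MonoidHom.coe_range, closure_eq]⟩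
  obtain ⟨σ, hσ⟩ := hH _ _ (small f₁) (small f₂)
    ((MonoidHom.ofInjective hf₁).symm.trans (MonoidHom.ofInjective hf₂))
  refine ⟨σ, fun x => ?_⟩
  simpa [MonoidHom.ofInjective_apply] using hσ (MonoidHom.ofInjective hf₁ x)

end Homogeneity

section Cofinality

open Monoid.Coprod

variable {G : Type u} [Group G] {κ : Cardinal.{u}}

theorem exists_injective_freeGroup_of_notMem (hU : IsUniversalUpTo κ G)
    (hH : IsHomogeneousBelow κ G) (hκ : ℵ₀ < κ) (C : ℕ → Subgroup G) {b : ℕ → G}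
    (hb : ∀ n, b n ∉ C n) :
    ∃ Λ : FreeGroup ℕ →* G, Injective Λ ∧ ∀ n, Λ (FreeGroup.of n) ∉ C n := by
  classical
  set B := closure (Set.range b)
  have : Countable B := countable_closure (Set.countable_range b)
  obtain ⟨φ₀, hφ₀⟩ := hU.exists_injective hκ (B ∗ FreeGroup ℕ)
  obtain ⟨σ, hσ⟩ := hH.exists_mulAut_comp_eq hκ (f₁ := φ₀.comp inl) (f₂ := B.subtype)
    (hφ₀.comp inl_injective) B.subtype_injective
  set φ := σ.toMonoidHom.comp φ₀
  have hφ (y : B) : φ (inl y) = y := hσ y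
  set y : ℕ → G := fun n => φ (inr (FreeGroup.of n))
  -- One of `y n`, `b n * y n` avoids `C n`, and `shear` keeps the chosen family free.
  set c : ℕ → B := fun n => if y n ∈ C n then ⟨b n, subset_closure ⟨n, rfl⟩⟩ else 1
  refine ⟨φ.comp ((shear c).comp inr),
    (σ.injective.comp hφ₀).comp ((shear_injective c).comp inr_injective), fun n => ?_⟩
  have hΛ : φ (shear c (inr (FreeGroup.of n))) = c n * y n := by
    rw [shear_inr_of, map_mul, hφ]
  simp only [MonoidHom.comp_apply, hΛ]
  by_cases h : y n ∈ C n
  · simp only [c, if_pos h]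
    exact fun hmem => hb n (by simpa using mul_mem hmem (inv_mem h))
  · simp [c, h]

theorem exists_range_le_closure_pair (hU : IsUniversalUpTo κ G) (hH : IsHomogeneousBelow κ G)
    (hκ : ℵ₀ < κ) {Λ : FreeGroup ℕ →* G} (hΛ : Injective Λ) :
    ∃ a b : G, Λ.range ≤ closure {a, b} := by
  obtain ⟨π, hπ⟩ := hU.exists_injective hκ ShiftHNN
  obtain ⟨σ, hσ⟩ := hH.exists_mulAut_comp_eq hκ (f₁ := π.comp HNNExtension.of) (f₂ := Λ)
    (hπ.comp (HNNExtension.of_injective _)) hΛ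
  set ρ := σ.toMonoidHom.comp π
  refine ⟨ρ (HNNExtension.of (FreeGroup.of 0)), ρ HNNExtension.t, ?_⟩
  rintro _ ⟨w, rfl⟩
  rw [← hσ, ← Set.image_pair, ← MonoidHom.map_closure, ShiftHNN.closure_pair_eq_top]
  exact ⟨_, mem_top _, rfl⟩

theorem exists_eq_top_of_monotone (hU : IsUniversalUpTo κ G) (hH : IsHomogeneousBelow κ G)
    (hκ : ℵ₀ < κ) {C : ℕ → Subgroup G} (hC : Monotone C) (hcover : ∀ g, ∃ n, g ∈ C n) :
    ∃ n, C n = ⊤ := by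
  by_contra! hne
  choose b hb using fun n => SetLike.exists_not_mem_of_ne_top (C n) (hne n)
  obtain ⟨Λ, hΛ, hΛC⟩ := exists_injective_freeGroup_of_notMem hU hH hκ C hb
  obtain ⟨a, a', hle⟩ := exists_range_le_closure_pair hU hH hκ hΛ
  obtain ⟨m, hm⟩ := hcover a
  obtain ⟨m', hm'⟩ := hcover a'
  have hpair : closure {a, a'} ≤ C (max m m') := by
    rw [closure_le, Set.insert_subset_iff, Set.singleton_subset_iff]
    exact ⟨hC (le_max_left m m') hm, hC (le_max_right m m') hm'⟩
  exact hΛC _ (hpair (hle ⟨_, rfl⟩))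

end Cofinality

section Stabilizer

variable {H G : Type*} [Group H] [Group G]

def fixedByStabilizer (e : MulAut H →* MulAut G) (s : Set H) : Subgroup G where
  carrier := {g | ∀ τ : MulAut H, (∀ x ∈ s, τ x = x) → e τ g = g}
  one_mem' _ _ := map_one _
  mul_mem' hg hg' τ hτ := by rw [map_mul, hg τ hτ, hg' τ hτ]
  inv_mem' hg τ hτ := by rw [map_inv, hg τ hτ]

variable (e : MulAut H →* MulAut G)

theorem fixedByStabilizer_mono : Monotone (fixedByStabilizer e) :=
  fun _ _ hst _ hg τ hτ => hg τ fun x hx => hτ x (hst hx)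

@[simp]
theorem fixedByStabilizer_closure (s : Set H) :
    fixedByStabilizer e (closure s) = fixedByStabilizer e s := by
  refine le_antisymm (fun g hg τ hτ => hg τ fun x hx => ?_) (fixedByStabilizer_mono e subset_closure)
  exact MonoidHom.eqOn_closure (f := τ.toMonoidHom) (g := MonoidHom.id H) hτ hx

theorem exists_finset_mem_fixedByStabilizer (he : Continuous e) (g : G) :
    ∃ s : Finset H, g ∈ fixedByStabilizer e s := by
  let _ : TopologicalSpace H := ⊥
  let _ : TopologicalSpace G := ⊥
  have : DiscreteTopology G := ⟨rfl⟩
  have hopen : IsOpen (e ⁻¹' {σ | σ g = g}) := by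
    refine (IsOpen.preimage ?_ (isOpen_discrete {g})).preimage he
    exact (continuous_apply g).comp continuous_induced_dom
  obtain ⟨O, hO, hOe⟩ := isOpen_induced_iff.mp hopen
  have h1 : ((1 : MulAut H) : H → H) ∈ O := by
    change (1 : MulAut H) ∈ (fun σ : MulAut H => (σ : H → H)) ⁻¹' O
    rw [hOe]
    simp
  obtain ⟨s, u, hu, hsub⟩ := isOpen_pi_iff.mp hO _ h1
  refine ⟨s, fun τ hτ => ?_⟩
  have : τ ∈ (fun σ : MulAut H => (σ : H → H)) ⁻¹' O :=
    hsub fun x hx => by simpa [hτ x hx] using (hu x hx).2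
  rwa [hOe] at this

theorem fixedByStabilizer_ne_top (he : Injective e) {s : Set H} {τ : MulAut H}
    (hτ : ∀ x ∈ s, τ x = x) (hτ1 : τ ≠ 1) : fixedByStabilizer e s ≠ ⊤ := by
  obtain ⟨g, hg⟩ : ∃ g, e τ g ≠ g := by
    by_contra! h
    exact hτ1 (he (by ext g; simpa using h g))
  exact fun htop => hg ((htop ▸ mem_top g : g ∈ fixedByStabilizer e s) τ hτ)

end Stabilizer

open Cardinal in
theorem randomGroupAut_not_universal_general
    {G : Type u} [Group G] (κ : Cardinal.{u})
    (hκ : Cardinal.aleph0 < κ)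
    (huniv : ∀ (H : Type u) [Group H], #H ≤ κ →
      ∃ K : Subgroup G, Nonempty (H ≃* K))
    (hhom : ∀ A B : Subgroup G,
      (∃ S : Set G, #S < κ ∧ Subgroup.closure S = A) →
      (∃ S : Set G, #S < κ ∧ Subgroup.closure S = B) →
      ∀ f : A ≃* B, ∃ g : MulAut G, ∀ a : A, g (a : G) = (f a : G)) :
    ∃ H : Subgroup G, Nonempty (H ≃* FreeGroup ℕ) ∧
      ¬ ∃ e : MulAut H →* MulAut G,
          Function.Injective e ∧ Continuous e := by
  obtain ⟨f, hf⟩ := IsUniversalUpTo.exists_injective huniv hκ (FreeGroup ℕ)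
  set ι := MonoidHom.ofInjective hf
  refine ⟨f.range, ⟨ι.symm⟩, ?_⟩
  rintro ⟨e, he_inj, he_cont⟩
  set x : ℕ → f.range := fun i => ι (FreeGroup.of i)
  set C : ℕ → Subgroup G := fun m => fixedByStabilizer e (x '' Set.Iio m)
  have hC : Monotone C :=
    (fixedByStabilizer_mono e).comp fun _ _ h => Set.image_mono (Set.Iio_subset_Iio h)
  have hcover (g : G) : ∃ m, g ∈ C m := by
    obtain ⟨s, hs⟩ := exists_finset_mem_fixedByStabilizer e he_cont g
    obtain ⟨m, hm⟩ := exists_subset_closure_image_Iio (closure_range_mulEquiv_of ι) s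
    exact ⟨m, (fixedByStabilizer_closure e _).le (fixedByStabilizer_mono e hm hs)⟩
  obtain ⟨n, hn⟩ := exists_eq_top_of_monotone huniv hhom hκ hC hcover
  obtain ⟨τ, hτ, hτ1⟩ := exists_mulAut_fixing_Iio_ne_one ι n
  exact fixedByStabilizer_ne_top e he_inj hτ hτ1 hn

open Cardinal in
/-- Let `κ` be an uncountable cardinal with `κ^{<κ} = κ` and let `G` be a group of
cardinality `κ` such that every group of cardinality at most `κ` is isomorphic to a
subgroup of `G` and every isomorphism between two subgroups of `G`, each generated by
strictly fewer than `κ` elements, extends to an automorphism of `G`. Then `Aut(G)` is not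
universal: there is a subgroup `H ≤ G`, isomorphic to the free group on countably many
generators, such that there is no injective continuous group homomorphism from `Aut(H)`
into `Aut(G)` (both with the pointwise convergence topology). -/
theorem randomGroupAut_not_universal
    {G : Type u} [Group G] (κ : Cardinal.{u})
    (hκ : Cardinal.aleph0 < κ) (hpow : κ ^< κ = κ)
    (hcard : #G = κ)
    (huniv : ∀ (H : Type u) [Group H], #H ≤ κ →
      ∃ K : Subgroup G, Nonempty (H ≃* K))
    (hhom : ∀ A B : Subgroup G,
      (∃ S : Set G, #S < κ ∧ Subgroup.closure S = A) →
      (∃ S : Set G, #S < κ ∧ Subgroup.closure S = B) →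
      ∀ f : A ≃* B, ∃ g : MulAut G, ∀ a : A, g (a : G) = (f a : G)) :
    ∃ H : Subgroup G, Nonempty (H ≃* FreeGroup ℕ) ∧
      ¬ ∃ e : MulAut H →* MulAut G,
          Function.Injective e ∧ Continuous e :=
  randomGroupAut_not_universal_general κ hκ huniv hhom
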